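/- For every permutation π' of length 3 not starting with 1, and every n ≥ 0, a Dumont permutation of the fourth kind of length 2n avoids the length-4 pattern (1, π'+1) if and only if it avoids the length-3 pattern π'. In particular, avoidance of 1342, 1432, 1324, 1423 on Dumont-4 permutations coincides with avoidance of 231, 321, 213, 312 respectively. -/
import Mathlib


/-- `π` contains the pattern `q` (a length-`k` sequence of distinct values given
as a function `Fin k → Fin k`) if some subsequence of `π` is order-isomorphic to `q`. -/
def PatternContains {n k : ℕ} (π : Equiv.Perm (Fin n)) (q : Fin k → Fin k) : Prop :=
  ∃ f : Fin k → Fin n, StrictMono f ∧ ∀ a b : Fin k, q a < q b ↔ π (f a) < π (f b)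

/-- `π` avoids the pattern `q`. -/
def Avoids {n k : ℕ} (π : Equiv.Perm (Fin n)) (q : Fin k → Fin k) : Prop :=
  ¬ PatternContains π q

/-- A Dumont permutation of the fourth kind of size `2n` (0-based indexing:
position `i` and value `π i` correspond to 1-based position `i+1` and value `π i + 1`):
every deficiency occurs at an even (1-based) position and has an even (1-based) value. -/
def IsDumont4 (n : ℕ) (π : Equiv.Perm (Fin (2 * n))) : Prop :=
  ∀ i : Fin (2 * n), (π i : ℕ) < (i : ℕ) → Even ((i : ℕ) + 1) ∧ Even ((π i : ℕ) + 1)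

def p1234 : Fin 4 → Fin 4 := ![0, 1, 2, 3]
def p1342 : Fin 4 → Fin 4 := ![0, 2, 3, 1]
def p1432 : Fin 4 → Fin 4 := ![0, 3, 2, 1]
def p1324 : Fin 4 → Fin 4 := ![0, 2, 1, 3]
def p1243 : Fin 4 → Fin 4 := ![0, 1, 3, 2]
def p1423 : Fin 4 → Fin 4 := ![0, 3, 1, 2]
def p231 : Fin 3 → Fin 3 := ![1, 2, 0]
def p321 : Fin 3 → Fin 3 := ![2, 1, 0]
def p213 : Fin 3 → Fin 3 := ![1, 0, 2]
def p312 : Fin 3 → Fin 3 := ![2, 0, 1]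

lemma dumont_zero {n : ℕ} (π : Equiv.Perm (Fin (2*n))) (hD : IsDumont4 n π)
    (z : Fin (2*n)) (hz : (z : ℕ) = 0) : π z = z := by
  rcases eq_or_ne (π.symm z) z with h | h
  · conv_lhs => rw [← h]
    exact π.apply_symm_apply z
  · exfalso
    have hπj : π (π.symm z) = z := π.apply_symm_apply z
    have hjne : (π.symm z : ℕ) ≠ 0 := fun h0 => h (Fin.ext (by omega))
    have hlt : (π (π.symm z) : ℕ) < (π.symm z : ℕ) := by rw [hπj, hz]; omega
    have := (hD _ hlt).2
    rw [hπj, hz] at this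
    simpa using this

lemma main_iff {n : ℕ} (π' : Equiv.Perm (Fin 3)) (h0 : π' 0 ≠ 0)
    (π : Equiv.Perm (Fin (2*n))) (hD : IsDumont4 n π) :
    PatternContains π (Fin.cons (0 : Fin 4) (fun j : Fin 3 => Fin.succ (π' j))) ↔
      PatternContains π ⇑π' := by
  constructor
  · rintro ⟨g, hg, hq⟩
    refine ⟨fun a => g a.succ, fun a b hab => hg (Fin.succ_lt_succ_iff.mpr hab), fun a b => ?_⟩
    have := hq a.succ b.succ
    simpa [Fin.cons_succ, Fin.succ_lt_succ_iff] using this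
  · rintro ⟨f, hf, hq⟩
    have hpos : 0 < 2*n := (f 0).pos
    set z : Fin (2*n) := ⟨0, hpos⟩ with hzdef
    have hπz : π z = z := dumont_zero π hD z rfl
    have hzle : ∀ a : Fin 3, z ≤ f a := fun a => Fin.mk_le_of_le_val (Nat.zero_le _)
    have hf0 : z < f 0 := by
      rcases lt_or_eq_of_le (hzle 0) with h | h
      · exact h
      · exfalso
        have hv : ∀ b : Fin 3, b ≠ 0 → (π' 0 : Fin 3) < π' b := by
          intro b hb
          rw [hq 0 b]
          have hne : f b ≠ f 0 := fun he => hb (hf.injective he)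
          rw [← h, hπz]
          have : π (f b) ≠ z := by
            rw [← hπz]; exact fun he => hne (by rw [← h]; exact π.injective he)
          have : (π (f b) : ℕ) ≠ 0 := fun h0 => this (Fin.ext h0)
          exact Fin.mk_lt_of_lt_val (by omega)
        have h1 := hv 1 (by decide)
        have h2 := hv 2 (by decide)
        have h12 : π' 1 ≠ π' 2 := fun he => by simpa using π'.injective he
        apply h0
        have c1 : (π' 1 : ℕ) < 3 := (π' 1).isLt
        have c2 : (π' 2 : ℕ) < 3 := (π' 2).isLt
        have e12 : (π' 1 : ℕ) ≠ (π' 2 : ℕ) := fun he => h12 (Fin.ext he)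
        have l1 : (π' 0 : ℕ) < (π' 1 : ℕ) := h1
        have l2 : (π' 0 : ℕ) < (π' 2 : ℕ) := h2
        exact Fin.ext (by omega)
    have hflt : ∀ a : Fin 3, z < f a := fun a => lt_of_lt_of_le hf0 (hf.monotone (Fin.zero_le a))
    have hπfpos : ∀ a : Fin 3, (0 : ℕ) < (π (f a) : ℕ) := by
      intro a
      have hne : π (f a) ≠ z := by
        rw [← hπz]
        exact fun he => absurd (π.injective he) (ne_of_gt (hflt a))
      have : (π (f a) : ℕ) ≠ 0 := fun h0 => hne (Fin.ext h0)
      omega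
    refine ⟨Fin.cons z f, ?_, ?_⟩
    · intro a b hab
      induction b using Fin.cases with
      | zero => exact absurd hab (Fin.not_lt_zero a)
      | succ b' =>
        induction a using Fin.cases with
        | zero => simpa [Fin.cons_succ] using hflt b'
        | succ a' =>
          simp only [Fin.cons_succ]
          exact hf (Fin.succ_lt_succ_iff.mp hab)
    · intro a b
      induction a using Fin.cases with
      | zero =>
        induction b using Fin.cases with
        | zero => simp
        | succ b' =>
          simp only [Fin.cons_zero, Fin.cons_succ, hπz]
          constructor
          · intro _
            exact Fin.mk_lt_of_lt_val (hπfpos b')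
          · intro _
            exact Fin.succ_pos _
      | succ a' =>
        induction b using Fin.cases with
        | zero =>
          simp only [Fin.cons_zero, Fin.cons_succ, hπz]
          constructor
          · intro h; exact absurd h (Fin.not_lt_zero _)
          · intro h
            exact absurd (hπfpos a') (by have : (π (f a') : ℕ) < 0 := h; omega)
        | succ b' =>
          simp only [Fin.cons_succ, Fin.succ_lt_succ_iff]
          exact hq a' b'

def q231 : Equiv.Perm (Fin 3) := ⟨![1, 2, 0], ![2, 0, 1], by decide, by decide⟩
def q321 : Equiv.Perm (Fin 3) := ⟨![2, 1, 0], ![2, 1, 0], by decide, by decide⟩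
def q213 : Equiv.Perm (Fin 3) := ⟨![1, 0, 2], ![1, 0, 2], by decide, by decide⟩
def q312 : Equiv.Perm (Fin 3) := ⟨![2, 0, 1], ![1, 2, 0], by decide, by decide⟩

/-- For any length-3 pattern π' not starting with its smallest entry, a Dumont-4
permutation avoids the length-4 pattern (1, π'+1) iff it avoids π'.  In particular,
avoiding 1342, 1432, 1324, 1423 coincides with avoiding 231, 321, 213, 312. -/
theorem stmt_18 :
    (∀ π' : Equiv.Perm (Fin 3), π' 0 ≠ 0 →
      ∀ (n : ℕ) (π : Equiv.Perm (Fin (2 * n))), IsDumont4 n π →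
        (Avoids π (Fin.cons (0 : Fin 4) (fun j : Fin 3 => Fin.succ (π' j))) ↔
          Avoids π ⇑π')) ∧
    (∀ (n : ℕ) (π : Equiv.Perm (Fin (2 * n))), IsDumont4 n π →
      (Avoids π p1342 ↔ Avoids π p231) ∧ (Avoids π p1432 ↔ Avoids π p321) ∧
      (Avoids π p1324 ↔ Avoids π p213) ∧ (Avoids π p1423 ↔ Avoids π p312)) := by
  have key : ∀ π' : Equiv.Perm (Fin 3), π' 0 ≠ 0 →
      ∀ (n : ℕ) (π : Equiv.Perm (Fin (2 * n))), IsDumont4 n π →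
        (Avoids π (Fin.cons (0 : Fin 4) (fun j : Fin 3 => Fin.succ (π' j))) ↔
          Avoids π ⇑π') := by
    intro π' h0 n π hD
    exact not_congr (main_iff π' h0 π hD)
  refine ⟨key, fun n π hD => ?_⟩
  have e1 : (Fin.cons (0 : Fin 4) (fun j : Fin 3 => Fin.succ (q231 j))) = p1342 := by decide
  have e2 : (Fin.cons (0 : Fin 4) (fun j : Fin 3 => Fin.succ (q321 j))) = p1432 := by decide
  have e3 : (Fin.cons (0 : Fin 4) (fun j : Fin 3 => Fin.succ (q213 j))) = p1324 := by decide
  have e4 : (Fin.cons (0 : Fin 4) (fun j : Fin 3 => Fin.succ (q312 j))) = p1423 := by decide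
  refine ⟨?_, ?_, ?_, ?_⟩
  · have h := key q231 (by decide) n π hD; rwa [e1, show ⇑q231 = p231 from rfl] at h
  · have h := key q321 (by decide) n π hD; rwa [e2, show ⇑q321 = p321 from rfl] at h
  · have h := key q213 (by decide) n π hD; rwa [e3, show ⇑q213 = p213 from rfl] at h
  · have h := key q312 (by decide) n π hD; rwa [e4, show ⇑q312 = p312 from rfl] at h
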